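/- For any nonzero integer a and any positive integer n, E_{2n,a} ≡ a (mod 2), and E_{2n,a} ≡ a(1-2n) (mod 4). -/

import Mathlib

open Finset

def EZ (a : ℤ) : ℕ → ℤ
  | 0 => 1
  | n + 1 =>
      -a * ∑ k ∈ (Finset.Icc 1 ((n + 1) / 2)).attach,
        ((n + 1).choose (2 * k.1) : ℤ) * EZ a (n + 1 - 2 * k.1)
  decreasing_by
    have h := Finset.mem_Icc.mp k.2
    omega

/-!
Reflecting `k ↦ m - k`, the recurrence reads `E_{2m} = -a ∑_{k<m} C(2m,2k) E_{2k}`. By strong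
induction, modulo 4 every `E_{2k}` with `k ≥ 1` may be replaced by `a(1-2k)`, while `E_0 = 1`.
The same reflection gives `∑_{k≤m} C(2m,2k)(1-2k) = (1-m) 2^{2m-1} ≡ 0 (mod 4)`, and
`2a² ≡ 2a (mod 4)` closes the induction. The congruence mod 2 follows from the one mod 4.
-/

theorem sum_range_two_mul {M : Type*} [AddCommMonoid M] (f : ℕ → M) (n : ℕ) :
    ∑ i ∈ range (2 * n), f i = ∑ k ∈ range n, (f (2 * k) + f (2 * k + 1)) := by
  induction n with
  | zero => simp
  | succ n ih =>
    rw [mul_add, mul_one, sum_range_succ, sum_range_succ, sum_range_succ, ih, add_assoc]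

theorem sum_range_choose_two_mul {m : ℕ} (hm : m ≠ 0) :
    ∑ k ∈ range (m + 1), ((2 * m).choose (2 * k) : ℤ) = 2 * 4 ^ (m - 1) := by
  have hrow : ∑ i ∈ range (2 * m + 1), ((2 * m).choose i : ℤ) = 4 ^ m := by
    rw [show (4 : ℤ) = 2 ^ 2 by norm_num, ← pow_mul]
    exact_mod_cast Nat.sum_range_choose (2 * m)
  have halt := Int.alternating_sum_range_choose_of_ne (n := 2 * m) (by omega)
  have hfour : (4 : ℤ) ^ m = 2 * (2 * 4 ^ (m - 1)) := by
    rw [← mul_assoc, show (2 : ℤ) * 2 = 4 by norm_num, ← pow_succ',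
      Nat.sub_add_cancel (Nat.one_le_iff_ne_zero.mpr hm)]
  refine mul_left_cancel₀ (two_ne_zero (α := ℤ)) ?_
  rw [← hfour]
  calc 2 * ∑ k ∈ range (m + 1), ((2 * m).choose (2 * k) : ℤ)
      = ∑ k ∈ range (m + 1), ((1 + (-1) ^ (2 * k)) * ((2 * m).choose (2 * k) : ℤ)
          + (1 + (-1) ^ (2 * k + 1)) * ((2 * m).choose (2 * k + 1) : ℤ)) := by
        rw [mul_sum]; refine sum_congr rfl fun k _ => ?_; simp [pow_succ, pow_mul]
    _ = ∑ i ∈ range (2 * m + 1), (1 + (-1) ^ i) * ((2 * m).choose i : ℤ) := by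
        rw [← sum_range_two_mul (fun i => (1 + (-1) ^ i) * ((2 * m).choose i : ℤ)), mul_add,
          mul_one, sum_range_succ _ (2 * m + 1),
          Nat.choose_succ_self, Nat.cast_zero, mul_zero, add_zero]
    _ = 4 ^ m := by simp only [add_mul, one_mul, sum_add_distrib, hrow, halt, add_zero]

theorem sum_range_choose_two_mul_mul_one_sub_two_mul (m : ℕ) :
    ∑ k ∈ range (m + 1), ((2 * m).choose (2 * k) : ℤ) * (1 - 2 * k)
      = (1 - m) * ∑ k ∈ range (m + 1), ((2 * m).choose (2 * k) : ℤ) := by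
  have hreflect := sum_range_reflect (fun k => ((2 * m).choose (2 * k) : ℤ) * (1 - 2 * k)) (m + 1)
  have hsymm : ∀ k ∈ range (m + 1),
      ((2 * m).choose (2 * (m + 1 - 1 - k)) : ℤ) * (1 - 2 * ((m + 1 - 1 - k : ℕ) : ℤ))
        = ((2 * m).choose (2 * k) : ℤ) * (1 - 2 * m + 2 * k) := by
    intro k hk
    have hkm : k ≤ m := Nat.lt_succ_iff.mp (mem_range.mp hk)
    rw [Nat.add_sub_cancel, Nat.mul_sub, Nat.choose_symm (by omega), Nat.cast_sub hkm]
    ring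
  rw [sum_congr rfl hsymm] at hreflect
  have hpair : ∑ k ∈ range (m + 1), ((2 * m).choose (2 * k) : ℤ) * (1 - 2 * m + 2 * k)
      + ∑ k ∈ range (m + 1), ((2 * m).choose (2 * k) : ℤ) * (1 - 2 * k)
      = 2 * ((1 - m) * ∑ k ∈ range (m + 1), ((2 * m).choose (2 * k) : ℤ)) := by
    rw [← sum_add_distrib, mul_sum, mul_sum]
    exact sum_congr rfl fun _ _ => by ring
  linarith

theorem EZ_zero (a : ℤ) : EZ a 0 = 1 := by
  rw [EZ]

theorem EZ_two_mul (a : ℤ) {m : ℕ} (hm : m ≠ 0) :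
    EZ a (2 * m) = -a * ∑ k ∈ range m, ((2 * m).choose (2 * k) : ℤ) * EZ a (2 * k) := by
  obtain ⟨j, rfl⟩ := Nat.exists_eq_succ_of_ne_zero hm
  rw [show 2 * (j + 1) = 2 * j + 1 + 1 by ring, EZ,
    sum_attach (Icc 1 ((2 * j + 1 + 1) / 2))
      fun k => ((2 * j + 1 + 1).choose (2 * k) : ℤ) * EZ a (2 * j + 1 + 1 - 2 * k),
    show (2 * j + 1 + 1) / 2 = j + 1 by omega]
  congr 1
  refine sum_nbij' (fun k => j + 1 - k) (fun k => j + 1 - k) ?_ ?_ ?_ ?_ ?_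
  all_goals intro k hk; simp only [mem_Icc, mem_range] at hk
  · rw [mem_range]; omega
  · rw [mem_Icc]; omega
  · omega
  · omega
  · rw [show 2 * (j + 1 - k) = 2 * j + 1 + 1 - 2 * k by omega, Nat.choose_symm (by omega)]

theorem two_mul_sq_zmod_four (x : ZMod 4) : 2 * x ^ 2 = 2 * x := by
  revert x; decide

theorem EZ_two_mul_cast_zmod_four (a : ℤ) {m : ℕ} (hm : m ≠ 0) :
    (EZ a (2 * m) : ZMod 4) = a * (1 - 2 * m) := by
  induction m using Nat.strong_induction_on with
  | _ m ih =>
  have hbinom : ∑ k ∈ range m, ((2 * m).choose (2 * k) : ZMod 4) * (1 - 2 * k) = 2 * m - 1 := by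
    have h := congrArg (Int.cast : ℤ → ZMod 4) (sum_range_choose_two_mul_mul_one_sub_two_mul m)
    rw [sum_range_choose_two_mul hm, sum_range_succ, Nat.choose_self] at h
    push_cast at h
    have hvanish : (1 - m : ZMod 4) * (2 * 4 ^ (m - 1)) = 0 := by
      obtain rfl | hm1 := eq_or_ne m 1
      · simp
      · rw [show m - 1 = m - 2 + 1 by omega, pow_succ, show (4 : ZMod 4) = 0 from rfl]; simp
    linear_combination h + hvanish
  have hrec : ∑ k ∈ range m, ((2 * m).choose (2 * k) : ZMod 4) * (EZ a (2 * k) : ZMod 4)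
      = (1 - a) + a * ∑ k ∈ range m, ((2 * m).choose (2 * k) : ZMod 4) * (1 - 2 * k) := by
    rw [mul_sum, ← sub_eq_iff_eq_add, ← sum_sub_distrib,
      sum_eq_single_of_mem 0 (mem_range.mpr (Nat.pos_of_ne_zero hm))]
    · simp [EZ_zero]
    · intro k hk hk0
      rw [ih k (mem_range.mp hk) hk0]
      ring
  rw [EZ_two_mul a hm]
  push_cast
  rw [hrec, hbinom]
  linear_combination (1 - (m : ZMod 4)) * two_mul_sq_zmod_four (a : ZMod 4)

theorem stmt15_general (a : ℤ) (n : ℕ) (hn : 1 ≤ n) :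
    EZ a (2 * n) ≡ a [ZMOD 2] ∧ EZ a (2 * n) ≡ a * (1 - 2 * n) [ZMOD 4] := by
  have h4 : EZ a (2 * n) ≡ a * (1 - 2 * n) [ZMOD 4] :=
    (ZMod.intCast_eq_intCast_iff _ _ 4).mp <| by
      push_cast; exact EZ_two_mul_cast_zmod_four a (by omega)
  exact ⟨(h4.of_dvd (by norm_num)).trans (Int.modEq_iff_dvd.mpr ⟨a * n, by ring⟩), h4⟩

theorem stmt15 (a : ℤ) (ha : a ≠ 0) (n : ℕ) (hn : 1 ≤ n) :
    EZ a (2 * n) ≡ a [ZMOD 2] ∧ EZ a (2 * n) ≡ a * (1 - 2 * n) [ZMOD 4] :=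
  stmt15_general a n hn
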